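/- arXiv:2108.02106 — 3 statements merged into one kernel-verified Lean document; each statement's English description precedes it below -/
import Mathlib

section
/- Let X be a scalable monoid over a ring R, and let C be an orbitoid possessing a unit element u. Then R is commutative (αβ = βα for all α, β ∈ R); and if C is non-trivial, i.e., C contains an element x with 0·x ≠ x, then R is non-trivial (0 ≠ 1 in R). -/
/-- A scalable monoid over a (unital, associative) ring `R`: a monoid `X` with a scaling
action `• : R × X → X` such that `1 • x = x`, `(a*b) • x = a • (b • x)`, and
`a • (x*y) = (a • x) * y = x * (a • y)`. -/
class ScalableMonoid (R X : Type*) [Ring R] [Monoid X] extends SMul R X where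
  one_smul : ∀ x : X, (1 : R) • x = x
  mul_smul : ∀ (a b : R) (x : X), (a * b) • x = a • (b • x)
  smul_mul_assoc : ∀ (a : R) (x y : X), a • (x * y) = (a • x) * y
  mul_smul_comm : ∀ (a : R) (x y : X), a • (x * y) = x * (a • y)

/-
In a scalable monoid all scalars act commutatively: writing `β • x = x * (β • 1)` and moving
`α` onto the left factor gives `α • β • x = (α • x) * (β • 1) = β • α • x`. Hence
`(α * β) • u = (β * α) • u`, and uniqueness of coordinates with respect to the unit element `u`
forces `α * β = β * α`.
-/

namespace ScalableMonoid

variable {R X : Type*} [Ring R] [Monoid X] [ScalableMonoid R X]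

theorem smul_eq_mul_smul_one (a : R) (x : X) : a • x = x * a • (1 : X) := by
  rw [← mul_smul_comm, mul_one]

theorem smul_smul_comm (a b : R) (x : X) : a • b • x = b • a • x := by
  rw [smul_eq_mul_smul_one b x, smul_mul_assoc, ← smul_eq_mul_smul_one]

theorem mul_comm_of_smul_left_injective {u : X}
    (hu : Function.Injective fun a : R => a • u) (a b : R) : a * b = b * a :=
  hu <| by simp only [mul_smul, smul_smul_comm a b u]

theorem zero_smul_eq_self_of_zero_eq_one (h : (0 : R) = 1) (x : X) : (0 : R) • x = x := by
  rw [h, one_smul]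

end ScalableMonoid

theorem stmt9_general {R X : Type*} [Ring R] [Monoid X] [ScalableMonoid R X]
    (u : X)
    (hu_inj : ∀ lam lam' : R, lam • u = lam' • u → lam = lam') :
    (∀ α β : R, α * β = β * α) ∧
    ((∃ x : X, (∃ α β : R, α • x = β • u) ∧ (0 : R) • x ≠ x) → (0 : R) ≠ (1 : R)) := by
  refine ⟨ScalableMonoid.mul_comm_of_smul_left_injective (u := u) hu_inj, ?_⟩
  rintro ⟨x, -, hx⟩ h01
  exact hx (ScalableMonoid.zero_smul_eq_self_of_zero_eq_one h01 x)

/-- If some orbitoid of a scalable monoid has a unit element `u`, then `R` is commutative;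
and if that orbitoid is non-trivial (contains `x` with `0 • x ≠ x`), then `R` is non-trivial. -/
theorem stmt9 {R X : Type*} [Ring R] [Monoid X] [ScalableMonoid R X]
    (u : X)
    (hu_gen : ∀ x : X, (∃ α β : R, α • x = β • u) → ∃ lam : R, x = lam • u)
    (hu_inj : ∀ lam lam' : R, lam • u = lam' • u → lam = lam') :
    (∀ α β : R, α * β = β * α) ∧
    ((∃ x : X, (∃ α β : R, α • x = β • u) ∧ (0 : R) • x ≠ x) → (0 : R) ≠ (1 : R)) :=
  stmt9_general u hu_inj
end

section
/- Let Q be a quantity space over a field K with basis {e_1, …, e_n}, and let x = μ·(e_1^{k_1}⋯e_n^{k_n}) and y = ν·(e_1^{ℓ_1}⋯e_n^{ℓ_n}). Then the following are equivalent: (1) x ~ y; (2) k_i = ℓ_i for i = 1, …, n; (3) e_1^{k_1}⋯e_n^{k_n} = e_1^{ℓ_1}⋯e_n^{ℓ_n}; (4) ν·x = μ·y. -/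
/-- A finite quantity-space basis for a commutative scalable monoid `Q` over a field `K`:
a finite family `e₁, …, eₙ` of invertible elements of `Q` such that every `x ∈ Q` has a
unique expansion `x = μ • (e₁^{k₁} ⋯ eₙ^{kₙ})` with `μ ∈ K` and integers `kᵢ`
(negative powers taken via inverses, i.e. in the group of units). -/
def IsQBasis (K : Type*) {Q : Type*} [Field K] [CommMonoid Q] [ScalableMonoid K Q]
    {n : ℕ} (e : Fin n → Qˣ) : Prop :=
  ∀ x : Q, ∃! p : K × (Fin n → ℤ),
    x = p.1 • (((∏ i, (e i) ^ (p.2 i)) : Qˣ) : Q)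

namespace ScalableMonoid

variable {X : Type*} [Monoid X]

def Commensurable (R : Type*) [Ring R] [ScalableMonoid R X] (x y : X) : Prop :=
  ∃ α β : R, α • x = β • y

theorem smul_left_comm {R : Type*} [CommRing R] [ScalableMonoid R X] (a b : R) (x : X) :
    a • b • x = b • a • x := by
  rw [← mul_smul, mul_comm, mul_smul]

end ScalableMonoid

namespace IsQBasis

open ScalableMonoid (Commensurable smul_left_comm)

variable {K Q : Type*} [Field K] [CommMonoid Q] [ScalableMonoid K Q]
  {n : ℕ} {e : Fin n → Qˣ}

theorem exponents_eq_of_smul_eq (he : IsQBasis K e) {c d : K} {k l : Fin n → ℤ}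
    (h : c • (((∏ i, e i ^ k i) : Qˣ) : Q) = d • (((∏ i, e i ^ l i) : Qˣ) : Q)) : k = l := by
  obtain ⟨_, _, hunique⟩ := he (c • (((∏ i, e i ^ k i) : Qˣ) : Q))
  exact congrArg Prod.snd ((hunique (c, k) rfl).trans (hunique (d, l) h).symm)

theorem exponents_eq_iff (he : IsQBasis K e) {k l : Fin n → ℤ} :
    k = l ↔ (((∏ i, e i ^ k i) : Qˣ) : Q) = (((∏ i, e i ^ l i) : Qˣ) : Q) := by
  refine ⟨fun h => h ▸ rfl, fun h => he.exponents_eq_of_smul_eq (c := 1) (d := 1) ?_⟩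
  rw [h]

theorem commensurable_smul_iff (he : IsQBasis K e) {μ ν : K} {k l : Fin n → ℤ} :
    Commensurable K (μ • (((∏ i, e i ^ k i) : Qˣ) : Q)) (ν • (((∏ i, e i ^ l i) : Qˣ) : Q)) ↔
      k = l := by
  constructor
  · rintro ⟨α, β, h⟩
    rw [← ScalableMonoid.mul_smul, ← ScalableMonoid.mul_smul] at h
    exact he.exponents_eq_of_smul_eq h
  · rintro rfl
    exact ⟨ν, μ, smul_left_comm ν μ _⟩

end IsQBasis

/-- In a quantity space, for `x = μ • (∏ eᵢ^{kᵢ})` and `y = ν • (∏ eᵢ^{ℓᵢ})` the following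
are equivalent: (1) `x ~ y`; (2) `k = ℓ`; (3) `∏ eᵢ^{kᵢ} = ∏ eᵢ^{ℓᵢ}`; (4) `ν • x = μ • y`. -/
theorem stmt12 {K Q : Type*} [Field K] [CommMonoid Q] [ScalableMonoid K Q]
    {n : ℕ} (e : Fin n → Qˣ) (he : IsQBasis K e)
    (x y : Q) (μ ν : K) (k l : Fin n → ℤ)
    (hx : x = μ • (((∏ i, (e i) ^ (k i)) : Qˣ) : Q))
    (hy : y = ν • (((∏ i, (e i) ^ (l i)) : Qˣ) : Q)) :
    ((∃ α β : K, α • x = β • y) ↔ k = l) ∧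
    (k = l ↔ (((∏ i, (e i) ^ (k i)) : Qˣ) : Q) = (((∏ i, (e i) ^ (l i)) : Qˣ) : Q)) ∧
    ((((∏ i, (e i) ^ (k i)) : Qˣ) : Q) = (((∏ i, (e i) ^ (l i)) : Qˣ) : Q) ↔
      ν • x = μ • y) := by
  subst hx hy
  refine ⟨he.commensurable_smul_iff, he.exponents_eq_iff, fun h => ?_, fun h => ?_⟩
  · rw [h, ScalableMonoid.smul_left_comm]
  · exact he.exponents_eq_iff.mp (he.commensurable_smul_iff.mp ⟨ν, μ, h⟩)
end

section
/- Let Q be a quantity space over a field K. If x, y ∈ Q are non-zero (0·x ≠ x and 0·y ≠ y), then their product xy is non-zero (0·(xy) ≠ xy). In particular, Q has no zero divisors. -/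
namespace ScalableMonoid

variable {R X : Type*} [Ring R] [Monoid X] [ScalableMonoid R X]

theorem zero_smul_smul (a : R) (x : X) : (0 : R) • a • x = (0 : R) • x := by
  rw [← ScalableMonoid.mul_smul, zero_mul]

theorem smul_mul_smul (a b : R) (x y : X) : (a • x) * (b • y) = (a * b) • (x * y) := by
  rw [ScalableMonoid.mul_smul, ScalableMonoid.mul_smul_comm, ScalableMonoid.smul_mul_assoc]

end ScalableMonoid

section QuantitySpace

variable {K Q : Type*} [Field K] [CommMonoid Q] [ScalableMonoid K Q] {n : ℕ}

def qMonomial (e : Fin n → Qˣ) (k : Fin n → ℤ) : Qˣ :=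
  ∏ i, e i ^ k i

theorem qMonomial_add (e : Fin n → Qˣ) (k l : Fin n → ℤ) :
    qMonomial e (k + l) = qMonomial e k * qMonomial e l := by
  simp only [qMonomial, Pi.add_apply, zpow_add, Finset.prod_mul_distrib]

namespace IsQBasis

variable {e : Fin n → Qˣ}

theorem exists_eq_smul_qMonomial (hb : IsQBasis K e) (x : Q) :
    ∃ (μ : K) (k : Fin n → ℤ), x = μ • (qMonomial e k : Q) :=
  let ⟨⟨μ, k⟩, hx, _⟩ := hb x
  ⟨μ, k, hx⟩

theorem smul_qMonomial_injective (hb : IsQBasis K e) (k : Fin n → ℤ) :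
    Function.Injective fun μ : K => μ • (qMonomial e k : Q) := fun μ ν h =>
  congrArg Prod.fst ((hb (μ • (qMonomial e k : Q))).unique (y₁ := (μ, k)) (y₂ := (ν, k)) rfl h)

theorem zero_smul_smul_qMonomial_eq_iff (hb : IsQBasis K e) (μ : K) (k : Fin n → ℤ) :
    (0 : K) • μ • (qMonomial e k : Q) = μ • (qMonomial e k : Q) ↔ μ = 0 := by
  rw [ScalableMonoid.zero_smul_smul, (hb.smul_qMonomial_injective k).eq_iff, eq_comm]

end IsQBasis

end QuantitySpace

/-- In a quantity space, the product of non-zero quantities is non-zero. -/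
theorem stmt14 {K Q : Type*} [Field K] [CommMonoid Q] [ScalableMonoid K Q]
    (hQ : ∃ (n : ℕ) (e : Fin n → Qˣ), IsQBasis K e)
    (x y : Q) (hx : (0 : K) • x ≠ x) (hy : (0 : K) • y ≠ y) :
    (0 : K) • (x * y) ≠ x * y := by
  obtain ⟨n, e, hb⟩ := hQ
  obtain ⟨μ, k, rfl⟩ := hb.exists_eq_smul_qMonomial x
  obtain ⟨ν, l, rfl⟩ := hb.exists_eq_smul_qMonomial y
  rw [ne_eq, hb.zero_smul_smul_qMonomial_eq_iff] at hx hy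
  rw [ne_eq, ScalableMonoid.smul_mul_smul, ← Units.val_mul, ← qMonomial_add,
    hb.zero_smul_smul_qMonomial_eq_iff]
  exact mul_ne_zero hx hy
end
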